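/- Fix q ∈ ((31 − 12√3)/23, (12√3 − 8)/23) and let δ* = min{4/q², 4/(1−q)²}. Let g_δ(x) = x·(1 − δ·(1−x)·(x−q)). Then there exists δ_q ∈ (0, δ*) such that for every δ ∈ (δ_q, δ*], the map g_δ has a periodic point of period 3, i.e. a point x ∈ [0,1] with g_δ³(x) = x, g_δ(x) ≠ x, and g_δ²(x) ≠ x. -/

import Mathlib

/-!
At `δ = 4/(1-q)²` the map factors as `g x = x (2x - 1 - q)² / (1-q)²`, so `c = (1+q)/2` is a double
zero, and the hump of `g` over `[0, q]` (at `(1+q)/6`, of height `2(1+q)³ / (27(1-q)²)`) reaches `c`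
as soon as `27(1-q)² ≤ 4(1+q)²`. A point `y ∈ (0, q)` with `g y = c` then has `g³ y = 0 < y`, and
this persists for `δ` near `4/(1-q)²`. Since `g x > x` on `(0, q)`, points `a` close to the fixed
point `0` have `g³ a > a`, so `g³` has a fixed point in `(a, y)`; it is not fixed by `g`, and `3` is
prime, so its minimal period is `3`. The other value `4/q²` of `δ*` is handled by the conjugacy
`x ↦ 1 - x`, which exchanges `q` and `1 - q`.
-/

open Function Set Filter Topology

theorem minimalPeriod_eq_of_semiconj {α β : Type*} {fa : α → α} {fb : β → β} {g : α → β}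
    (hg : Injective g) (h : Semiconj g fa fb) (x : α) :
    minimalPeriod fb (g x) = minimalPeriod fa x :=
  minimalPeriod_eq_minimalPeriod_iff.mpr fun n => by
    simp only [IsPeriodicPt, IsFixedPt, ← (h.iterate_right n).eq, hg.eq_iff]

theorem iterate_three_eq_and_ne_of_minimalPeriod_eq_three {α : Type*} {f : α → α} {x : α}
    (h : minimalPeriod f x = 3) : f^[3] x = x ∧ f x ≠ x ∧ f^[2] x ≠ x := by
  refine ⟨h ▸ isPeriodicPt_minimalPeriod f x, fun h1 => ?_, fun h2 => ?_⟩
  · have := minimalPeriod_eq_one_iff_isFixedPt.mpr h1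
    omega
  · have := (show IsPeriodicPt f 2 x from h2).minimalPeriod_dvd
    rw [h] at this
    norm_num at this

theorem exists_minimalPeriod_eq_prime_of_iterate_sub_self_sign_change {f : ℝ → ℝ}
    (hf : Continuous f) {p : ℕ} [Fact p.Prime] {a b : ℝ} (hab : a ≤ b) (ha : a ≤ f^[p] a)
    (hb : f^[p] b ≤ b) (hfix : ∀ x ∈ Icc a b, f x ≠ x) :
    ∃ x ∈ Icc a b, minimalPeriod f x = p := by
  obtain ⟨x, hx, hx0⟩ := intermediate_value_Icc' hab ((hf.iterate p).sub continuous_id).continuousOn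
    (show (0 : ℝ) ∈ Icc (f^[p] b - b) (f^[p] a - a) from ⟨by linarith, by linarith⟩)
  exact ⟨x, hx, minimalPeriod_eq_prime (sub_eq_zero.mp hx0) (hfix x hx)⟩

theorem exists_lt_iterate_of_lt_self {f : ℝ → ℝ} (hf : Continuous f) {p q b : ℝ} (hp : f p = p)
    (hpq : p < q) (hlt : ∀ x ∈ Ioo p q, x < f x) (hpb : p < b) {n : ℕ} (hn : n ≠ 0) :
    ∃ a ∈ Ioo p b, a < f^[n] a := by
  have hnear : ∀ᶠ x in 𝓝[>] p, p < x ∧ x < b ∧ ∀ k < n, f^[k] x < q := by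
    refine eventually_mem_nhdsWithin.and (nhdsWithin_le_nhds ((eventually_lt_nhds hpb).and ?_))
    refine (eventually_all_finite (finite_Iio n)).mpr fun k _ => ?_
    exact (hf.iterate k).continuousAt.eventually_lt continuousAt_const (by simpa [iterate_fixed hp])
  obtain ⟨a, hpa, hab, horbit⟩ := hnear.exists
  have hgrow : ∀ k < n, a ≤ f^[k] a → f^[k] a < f^[k + 1] a := fun k hk h => by
    rw [iterate_succ_apply']
    exact hlt _ ⟨hpa.trans_le h, horbit k hk⟩
  have hmono : ∀ k ≤ n, a ≤ f^[k] a := by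
    intro k hk
    induction k with
    | zero => rfl
    | succ k ih => exact (ih (by omega)).trans (hgrow k (by omega) (ih (by omega))).le
  obtain ⟨m, rfl⟩ := Nat.exists_eq_succ_of_ne_zero hn
  exact ⟨a, ⟨hpa, hab⟩, (hmono m (by omega)).trans_lt (hgrow m (by omega) (hmono m (by omega)))⟩

theorem exists_Ioc_subset_of_eventually_nhds {D : ℝ} (hD : 0 < D) {P : ℝ → Prop}
    (h : ∀ᶠ δ in 𝓝 D, P δ) : ∃ δq ∈ Ioo 0 D, ∀ δ ∈ Ioc δq D, P δ := by
  obtain ⟨l, hl, hsub⟩ :=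
    (mem_nhdsLE_iff_exists_mem_Ico_Ioc_subset (half_lt_self hD)).mp (nhdsWithin_le_nhds h)
  exact ⟨l, ⟨(half_pos hD).trans_le hl.1, hl.2⟩, hsub⟩

/-- The map `f^II_{δ,q}` of the pairwise proportional imitation dynamics. -/
def ppiMap (q δ x : ℝ) : ℝ := x * (1 - δ * (1 - x) * (x - q))

section ppiMap

variable {q δ : ℝ}

theorem ppiMap_one_sub (q δ x : ℝ) : ppiMap q δ (1 - x) = 1 - ppiMap (1 - q) δ x := by
  unfold ppiMap; ring

theorem continuous_ppiMap (q δ : ℝ) : Continuous (ppiMap q δ) := by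
  unfold ppiMap; fun_prop

theorem ppiMap_zero (q δ : ℝ) : ppiMap q δ 0 = 0 := by
  simp [ppiMap]

theorem lt_ppiMap_self (hδ : 0 < δ) (hq : q ≤ 1) {x : ℝ} (hx : x ∈ Ioo 0 q) :
    x < ppiMap q δ x := by
  obtain ⟨hx0, hxq⟩ := hx
  have : 0 < δ * x * (1 - x) * (q - x) :=
    mul_pos (mul_pos (mul_pos hδ hx0) (by linarith)) (by linarith)
  unfold ppiMap; nlinarith

theorem ppiMap_four_div_one_sub_sq (hq : q ≠ 1) (x : ℝ) :
    ppiMap q (4 / (1 - q) ^ 2) x = x * (2 * x - 1 - q) ^ 2 / (1 - q) ^ 2 := by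
  have : 1 - q ≠ 0 := sub_ne_zero.mpr hq.symm
  unfold ppiMap; field_simp; ring

theorem exists_ppiMap_four_div_one_sub_sq_eq (hq : q < 1)
    (hthr : 27 * (1 - q) ^ 2 ≤ 4 * (1 + q) ^ 2) :
    ∃ y ∈ Ioo 0 q, ppiMap q (4 / (1 - q) ^ 2) y = (1 + q) / 2 := by
  have hq' : 1 / 5 < q := by nlinarith
  have hmax : (1 + q) / 2 ≤ ppiMap q (4 / (1 - q) ^ 2) ((1 + q) / 6) := by
    rw [ppiMap_four_div_one_sub_sq hq.ne, le_div_iff₀ (by nlinarith)]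
    nlinarith
  obtain ⟨y, hy, hyc⟩ := intermediate_value_Icc (by linarith) (continuous_ppiMap q _).continuousOn
    ⟨(ppiMap_zero q _).trans_le (by linarith), hmax⟩
  refine ⟨y, ⟨hy.1.lt_of_ne ?_, by linarith [hy.2]⟩, hyc⟩
  rintro rfl
  rw [ppiMap_zero] at hyc
  linarith

theorem eventually_exists_minimalPeriod_ppiMap_eq_three_below (hq0 : 0 < q) (hq1 : q < 1)
    (hthr : 27 * (1 - q) ^ 2 ≤ 4 * (1 + q) ^ 2) :
    ∀ᶠ δ in 𝓝 (4 / (1 - q) ^ 2), ∃ x ∈ Ioo 0 q, minimalPeriod (ppiMap q δ) x = 3 := by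
  obtain ⟨y, hy, hyc⟩ := exists_ppiMap_four_div_one_sub_sq_eq hq1 hthr
  have hy3 : (ppiMap q (4 / (1 - q) ^ 2))^[3] y = 0 := by
    simp only [iterate_succ_apply', iterate_zero_apply, hyc, ppiMap_four_div_one_sub_sq hq1.ne]
    ring
  have hcont : Continuous fun δ => (ppiMap q δ)^[3] y := by
    simp only [iterate_succ_apply', iterate_zero_apply]; unfold ppiMap; fun_prop
  filter_upwards [hcont.continuousAt.eventually_lt continuousAt_const (hy3.trans_lt hy.1),
    eventually_gt_nhds (by have := sub_pos.2 hq1; positivity)] with δ hδy hδ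
  have hlt : ∀ x ∈ Ioo 0 q, x < ppiMap q δ x := fun x hx => lt_ppiMap_self hδ hq1.le hx
  obtain ⟨a, ha, ha3⟩ := exists_lt_iterate_of_lt_self (continuous_ppiMap q δ) (ppiMap_zero q δ)
    hq0 hlt hy.1 three_ne_zero
  have hsub : Icc a y ⊆ Ioo 0 q := Icc_subset_Ioo ha.1 hy.2
  obtain ⟨x, hx, hper⟩ := exists_minimalPeriod_eq_prime_of_iterate_sub_self_sign_change
    (continuous_ppiMap q δ) ha.2.le ha3.le hδy.le fun x hx => (hlt x (hsub hx)).ne'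
  exact ⟨x, hsub hx, hper⟩

theorem eventually_exists_minimalPeriod_ppiMap_eq_three_above (hq0 : 0 < q) (hq1 : q < 1)
    (hthr : 27 * q ^ 2 ≤ 4 * (2 - q) ^ 2) :
    ∀ᶠ δ in 𝓝 (4 / q ^ 2), ∃ x ∈ Ioo q 1, minimalPeriod (ppiMap q δ) x = 3 := by
  have h := eventually_exists_minimalPeriod_ppiMap_eq_three_below (q := 1 - q) (by linarith)
    (by linarith) (by linarith)
  rw [sub_sub_cancel] at h
  refine h.mono fun δ ⟨x, hx, hper⟩ => ⟨1 - x, ⟨by linarith [hx.2], by linarith [hx.1]⟩, ?_⟩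
  rwa [minimalPeriod_eq_of_semiconj sub_right_injective fun x => (ppiMap_one_sub q δ x).symm]

end ppiMap

/-- `(31 - 12√3)/23` and `(12√3 - 8)/23` are the roots in `(0, 1)` of `27(1-q)² = 4(1+q)²` and
`27q² = 4(2-q)²`. -/
theorem threshold_of_mem_Ioo {q : ℝ}
    (hq : q ∈ Ioo ((31 - 12 * Real.sqrt 3) / 23) ((12 * Real.sqrt 3 - 8) / 23)) :
    0 < q ∧ q < 1 ∧ 27 * (1 - q) ^ 2 ≤ 4 * (1 + q) ^ 2 ∧ 27 * q ^ 2 ≤ 4 * (2 - q) ^ 2 := by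
  obtain ⟨hl, hu⟩ := hq
  have h3 := Real.sq_sqrt (show (0 : ℝ) ≤ 3 by norm_num)
  have hs : Real.sqrt 3 < 7 / 4 := by nlinarith [Real.sqrt_nonneg 3]
  refine ⟨by linarith, by linarith, ?_, ?_⟩ <;> nlinarith [Real.sqrt_nonneg 3]

/-- Fix `q ∈ ((31 − 12√3)/23, (12√3 − 8)/23)` and let `δ* = min {4/q², 4/(1−q)²}`.
Let `g_δ x = x * (1 − δ*(1−x)*(x−q))`.  Then there exists `δ_q ∈ (0, δ*)` such
that for every `δ ∈ (δ_q, δ*]`, the map `g_δ` has a periodic point of period 3: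
a point `x ∈ [0,1]` with `g_δ³(x) = x`, `g_δ(x) ≠ x` and `g_δ²(x) ≠ x`. -/
theorem ppi_period_three (q : ℝ)
    (hq : q ∈ Set.Ioo ((31 - 12 * Real.sqrt 3) / 23) ((12 * Real.sqrt 3 - 8) / 23))
    (g : ℝ → ℝ → ℝ)
    (hg : ∀ δ x : ℝ, g δ x = x * (1 - δ * (1 - x) * (x - q))) :
    ∃ δq ∈ Set.Ioo (0:ℝ) (min (4 / q ^ 2) (4 / (1 - q) ^ 2)),
      ∀ δ ∈ Set.Ioc δq (min (4 / q ^ 2) (4 / (1 - q) ^ 2)),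
        ∃ x ∈ Set.Icc (0:ℝ) 1,
          (g δ)^[3] x = x ∧ g δ x ≠ x ∧ (g δ)^[2] x ≠ x := by
  obtain ⟨hq0, hq1, hbelow, habove⟩ := threshold_of_mem_Ioo hq
  have hD : 0 < min (4 / q ^ 2) (4 / (1 - q) ^ 2) := by
    have := sub_pos.2 hq1
    exact lt_min (by positivity) (by positivity)
  have hev : ∀ᶠ δ in 𝓝 (min (4 / q ^ 2) (4 / (1 - q) ^ 2)),
      ∃ x ∈ Icc (0 : ℝ) 1, minimalPeriod (ppiMap q δ) x = 3 := by
    rcases min_choice (4 / q ^ 2) (4 / (1 - q) ^ 2) with h | h <;> rw [h]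
    · exact (eventually_exists_minimalPeriod_ppiMap_eq_three_above hq0 hq1 habove).mono
        fun δ ⟨x, hx, hper⟩ => ⟨x, ⟨hq0.le.trans hx.1.le, hx.2.le⟩, hper⟩
    · exact (eventually_exists_minimalPeriod_ppiMap_eq_three_below hq0 hq1 hbelow).mono
        fun δ ⟨x, hx, hper⟩ => ⟨x, ⟨hx.1.le, hx.2.le.trans hq1.le⟩, hper⟩
  obtain ⟨δq, hδq, hP⟩ := exists_Ioc_subset_of_eventually_nhds hD hev
  refine ⟨δq, hδq, fun δ hδ => ?_⟩
  obtain ⟨x, hx, hper⟩ := hP δ hδ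
  have hgδ : g δ = ppiMap q δ := funext (hg δ)
  exact ⟨x, hx, hgδ ▸ iterate_three_eq_and_ne_of_minimalPeriod_eq_three hper⟩
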